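/- arXiv:1901.09363 — 2 statements merged into one kernel-verified Lean document; each statement's English description precedes it below -/
import Mathlib

section
/- Let R = (V, ≤, ρ_1, …, ρ_k) be an ordered binary structure of type k such that the equivalence relation ≃_R has infinitely many equivalence classes. Then one of the following holds: (1) there is an infinite subset A ⊆ V such that any two distinct elements of A are ≃_{0,R}-equivalent but not ≃_{1,R}-equivalent; (2) there are two disjoint infinite subsets A_1, A_2 of V such that any two distinct elements of A_i (for i ∈ {1,2}) are ≃_{1,R}-equivalent but not ≃_{2,R}-equivalent, and for every x, y ∈ A_i with x < y the interval [x,y] meets A_j for j ≠ i. -/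
/-- An ordered binary structure: a domain `V`, a linear order `le` on `V`,
and a family of binary relations `rel i` on `V` indexed by `ι`. -/
structure OrdBin (ι : Type) where
  V : Type
  le : V → V → Prop
  linear : IsLinearOrder V le
  rel : ι → V → V → Prop

namespace OrdBin

variable {ι : Type}

/-- The substructure induced on a subset `A` of the domain. -/
def restrict (R : OrdBin ι) (A : Set R.V) : OrdBin ι where
  V := A
  le := fun a b => R.le a.1 b.1
  linear := by
    haveI := R.linear
    exact
      { refl := fun a => refl_of R.le a.1
        trans := fun a b c hab hbc => trans_of R.le hab hbc
        antisymm := fun a b hab hba => Subtype.ext (antisymm_of R.le hab hba)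
        total := fun a b => total_of R.le a.1 b.1 }
  rel := fun i a b => R.rel i a.1 b.1

/-- Isomorphism of ordered binary structures: a bijection of the domains preserving
the linear order and each binary relation. -/
def Iso (R S : OrdBin ι) : Prop :=
  ∃ e : R.V ≃ S.V, (∀ x y : R.V, R.le x y ↔ S.le (e x) (e y)) ∧
    ∀ (i : ι) (x y : R.V), R.rel i x y ↔ S.rel i (e x) (e y)

/-- `R` embeds in `S` if `R` is isomorphic to an induced substructure of `S`. -/
def Embeds (R S : OrdBin ι) : Prop :=
  ∃ A : Set S.V, Iso R (S.restrict A)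

/-- `B` is a monomorphic part of `R`: any two finite subsets of the domain of the
same cardinality which agree outside `B` induce isomorphic substructures. -/
def MonoPart (R : OrdBin ι) (B : Set R.V) : Prop :=
  ∀ A A' : Set R.V, A.Finite → A'.Finite → A.ncard = A'.ncard →
    A \ B = A' \ B → Iso (R.restrict A) (R.restrict A')

/-- A monomorphic decomposition of `R`: a partition of the domain into monomorphic parts. -/
def MonoDecomp (R : OrdBin ι) (P : Set (Set R.V)) : Prop :=
  Setoid.IsPartition P ∧ ∀ B ∈ P, R.MonoPart B

/-- `R` has a monomorphic decomposition with finitely many blocks. -/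
def HasFiniteMonoDecomp (R : OrdBin ι) : Prop :=
  ∃ P : Set (Set R.V), R.MonoDecomp P ∧ P.Finite

/-- A hereditary class of finite ordered binary structures. -/
def Hereditary (C : Set (OrdBin ι)) : Prop :=
  (∀ R ∈ C, Finite R.V) ∧ ∀ R ∈ C, ∀ S : OrdBin ι, Embeds S R → S ∈ C

/-- `x` and `y` are `F`-equivalent: the substructures induced on `{x} ∪ F` and
`{y} ∪ F` are isomorphic. -/
def EqF (R : OrdBin ι) (F : Set R.V) (x y : R.V) : Prop :=
  Iso (R.restrict (insert x F)) (R.restrict (insert y F))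

/-- `x ≃_{m,R} y`: `x` and `y` are `F`-equivalent for every `m`-element subset `F`
of `V \ {x, y}`. -/
def EqM (R : OrdBin ι) (m : ℕ) (x y : R.V) : Prop :=
  ∀ F : Set R.V, F.Finite → F.ncard = m → x ∉ F → y ∉ F → EqF R F x y

/-- `x ≃_{≤m,R} y`: `x ≃_{m',R} y` for every `m' ≤ m`. -/
def EqLe (R : OrdBin ι) (m : ℕ) (x y : R.V) : Prop :=
  ∀ m' ≤ m, EqM R m' x y

/-- `x ≃_R y`: `x ≃_{m,R} y` for every `m`. -/
def EqR (R : OrdBin ι) (x y : R.V) : Prop :=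
  ∀ m : ℕ, EqM R m x y

/-- `d(x,y) = d(x',y')`: the pair of truth values `(ρ_i(x,y), ρ_i(y,x))` agrees with
`(ρ_i(x',y'), ρ_i(y',x'))` for every `i`. -/
def dEq (R : OrdBin ι) (x y x' y' : R.V) : Prop :=
  ∀ i : ι, (R.rel i x y ↔ R.rel i x' y') ∧ (R.rel i y x ↔ R.rel i y' x')

/-- `A` is an interval of the linear order `(V, le)`. -/
def IntervalLe (R : OrdBin ι) (A : Set R.V) : Prop :=
  ∀ u ∈ A, ∀ w ∈ A, ∀ z : R.V, R.le u z → R.le z w → z ∈ A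

/-- `A` is an interval of `R`: an interval of the order such that all elements of `A`
have the same relations to each element outside `A`. -/
def IntervalR (R : OrdBin ι) (A : Set R.V) : Prop :=
  IntervalLe R A ∧ ∀ u ∈ A, ∀ u' ∈ A, ∀ w ∉ A, dEq R u w u' w

/-- `R` is `n`-monomorphic: the substructures induced on any two `n`-element subsets
of the domain are isomorphic. -/
def NMono (R : OrdBin ι) (n : ℕ) : Prop :=
  ∀ A A' : Set R.V, A.Finite → A'.Finite → A.ncard = n → A'.ncard = n →
    Iso (R.restrict A) (R.restrict A')

/-- `R` is `(≤n)`-monomorphic. -/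
def LeMono (R : OrdBin ι) (n : ℕ) : Prop :=
  ∀ m ≤ n, NMono R m

/-- `R` is monomorphic. -/
def Mono (R : OrdBin ι) : Prop :=
  ∀ n : ℕ, NMono R n

/-- The profile of `R`: the number of induced substructures on `n`-element subsets
of the domain, counted up to isomorphism. -/
noncomputable def profileR (R : OrdBin ι) (n : ℕ) : ℕ :=
  Nat.card (Quot fun (A B : {A : Set R.V // A.Finite ∧ A.ncard = n}) =>
    Iso (R.restrict A.1) (R.restrict B.1))

/-- The profile of a class `C`: the number of members of `C` with exactly `n`
elements, counted up to isomorphism. -/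
noncomputable def profileC (C : Set (OrdBin ι)) (n : ℕ) : ℕ :=
  Nat.card (Quot fun (R S : {R : OrdBin ι // R ∈ C ∧ Nat.card R.V = n}) =>
    Iso R.1 S.1)

end OrdBin

/-- The Fibonacci sequence with `F 0 = F 1 = 1`. -/
def fib1 : ℕ → ℕ
  | 0 => 1
  | 1 => 1
  | n + 2 => fib1 (n + 1) + fib1 n

/-!
If `x < y` and `x ≃_{≤2} y`, comparing `{x} ∪ F` with `{y} ∪ F` for `|F| ≤ 2` shows that
all points of `[x, y]` carry the same loops, relate in the same way to every point outside
`[x, y]`, and that all pairs in `[x, y]` other than `{x, y}` have the same type. As the relations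
are binary, the map moving `x` and the points of `F` inside `(x, y)` one step up along `F ∪ {y}`,
and fixing the rest of `F`, is then an isomorphism; so `≃_{≤2}` is `≃_R`.

If `≃_{≤1}` has infinitely many classes, pigeonholing an infinite set of pairwise
`≃_{≤1}`-inequivalent points by their (finitely many) loop types gives the first alternative.
Otherwise an infinite set of pairwise `≃_R`-inequivalent points has an infinite subset inside
one `≃_{≤1}`-class; the even and odd terms of a monotone sequence in it are the two interleaved
sets.
-/

open Set Function

theorem exists_infinite_pairwise_not_of_infinite_classes {α : Type*} {E : α → α → Prop}
    (hsymm : ∀ {a b}, E a b → E b a) (htrans : ∀ {a b c}, E a b → E b c → E a c)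
    (h : {A : Set α | ∃ a, A = {y | E a y}}.Infinite) :
    ∃ B : Set α, B.Infinite ∧ B.Pairwise fun x y => ¬E x y := by
  have := h.to_subtype
  choose rep hrep using fun A : {A : Set α | ∃ a, A = {y | E a y}} => A.2
  have hinj : Injective rep := fun A B hAB => Subtype.ext (by rw [hrep, hrep, hAB])
  refine ⟨range rep, infinite_range_of_injective hinj, ?_⟩
  rintro _ ⟨A, rfl⟩ _ ⟨B, rfl⟩ hne hE
  refine hne (congrArg rep (Subtype.ext ?_))
  rw [hrep A, hrep B]
  ext z
  exact ⟨htrans (hsymm hE), htrans hE⟩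

theorem Set.Infinite.exists_infinite_subset_const {α β : Type*} [Finite β] {B : Set α}
    (hB : B.Infinite) (f : α → β) :
    ∃ C ⊆ B, C.Infinite ∧ ∃ c, ∀ x ∈ C, f x = c := by
  obtain ⟨c, hc⟩ : ∃ c, (B ∩ f ⁻¹' {c}).Infinite := by
    by_contra! h
    exact hB ((finite_iUnion h).subset fun x hx => mem_iUnion.2 ⟨f x, hx, rfl⟩)
  exact ⟨_, inter_subset_left, hc, c, fun x hx => hx.2⟩

theorem Set.Infinite.exists_infinite_pairwise_of_finite_classes {α : Type*}
    {E : α → α → Prop} (hrefl : ∀ a, E a a) (hfin : {A : Set α | ∃ a, A = {y | E a y}}.Finite)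
    {B : Set α} (hB : B.Infinite) : ∃ C ⊆ B, C.Infinite ∧ C.Pairwise E := by
  have := hfin.to_subtype
  obtain ⟨C, hCB, hC, c, hc⟩ := hB.exists_infinite_subset_const
    fun a => (⟨_, a, rfl⟩ : {A : Set α | ∃ a, A = {y | E a y}})
  refine ⟨C, hCB, hC, fun x hx y hy _ => ?_⟩
  have hxy : {z | E x z} = {z | E y z} := congrArg Subtype.val ((hc x hx).trans (hc y hy).symm)
  change y ∈ {z | E x z}
  rw [hxy]
  exact hrefl y

section LinearOrder

variable {α : Type*} [LinearOrder α]

theorem Set.Finite.exists_bijOn_strictMonoOn {s t : Set α} (hs : s.Finite) (ht : t.Finite)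
    (hst : s.ncard = t.ncard) : ∃ g : α → α, BijOn g s t ∧ StrictMonoOn g s := by
  classical
  obtain ⟨s, rfl⟩ := hs.exists_finset_coe
  obtain ⟨t, rfl⟩ := ht.exists_finset_coe
  rw [ncard_coe_finset, ncard_coe_finset] at hst
  let σ : s ≃o t := (s.orderIsoOfFin rfl).symm.trans (t.orderIsoOfFin hst.symm)
  let g : α → α := fun v => if h : v ∈ s then σ ⟨v, h⟩ else v
  have hg : ∀ v (h : v ∈ s), g v = σ ⟨v, h⟩ := fun v h => dif_pos h
  have hmono : StrictMonoOn g s := fun u hu v hv huv => by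
    rw [hg u hu, hg v hv]
    exact σ.strictMono (show (⟨u, hu⟩ : s) < ⟨v, hv⟩ from huv)
  refine ⟨g, ⟨fun v hv => hg v hv ▸ (σ _).2, hmono.injOn, fun w hw => ?_⟩, hmono⟩
  refine ⟨σ.symm ⟨w, hw⟩, (σ.symm ⟨w, hw⟩).2, ?_⟩
  rw [hg _ (σ.symm ⟨w, hw⟩).2, Subtype.coe_eta, OrderIso.apply_symm_apply]

theorem StrictMonoOn.piecewise_Icc_id {g : α → α} {s : Set α} {x y : α}
    (hg : StrictMonoOn g (s ∩ Icc x y)) (hmaps : MapsTo g (s ∩ Icc x y) (Icc x y)) :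
    StrictMonoOn ((Icc x y).piecewise g id) s := by
  intro u hu v hv huv
  by_cases huI : u ∈ Icc x y <;> by_cases hvI : v ∈ Icc x y <;>
    simp only [piecewise_eq_of_mem, piecewise_eq_of_notMem, huI, hvI, not_false_eq_true, id]
  · exact hg ⟨hu, huI⟩ ⟨hv, hvI⟩ huv
  · exact (hmaps ⟨hu, huI⟩).2.trans_lt (lt_of_not_ge fun h => hvI ⟨huI.1.trans huv.le, h⟩)
  · exact (lt_of_not_ge fun h => huI ⟨h, huv.le.trans hvI.2⟩).trans_le (hmaps ⟨hv, hvI⟩).1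
  · exact huv

theorem Set.Finite.exists_shift {F : Set α} (hF : F.Finite) {x y : α} (hxy : x < y)
    (hx : x ∉ F) (hy : y ∉ F) :
    ∃ g : α → α, BijOn g (insert x F) (insert y F) ∧ StrictMonoOn g (insert x F) ∧
      (∀ v ∉ Icc x y, g v = v) ∧ MapsTo g (insert x F ∩ Icc x y) (Ioc x y) := by
  have hxI : x ∈ Icc x y := ⟨le_rfl, hxy.le⟩
  have hyI : y ∈ Icc x y := ⟨hxy.le, le_rfl⟩
  have hFI : (F ∩ Icc x y).Finite := hF.inter_of_left _
  have hcard : (insert x F ∩ Icc x y).ncard = (insert y F ∩ Icc x y).ncard := by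
    rw [insert_inter_of_mem hxI, insert_inter_of_mem hyI, ncard_insert_of_notMem
      (fun h => hx h.1) hFI, ncard_insert_of_notMem (fun h => hy h.1) hFI]
  obtain ⟨g, hbij, hmono⟩ := Finite.exists_bijOn_strictMonoOn
    ((hF.insert x).inter_of_left _) ((hF.insert y).inter_of_left _) hcard
  set g' := (Icc x y).piecewise g id
  have hgg' : EqOn g g' (insert x F ∩ Icc x y) := fun v hv =>
    (piecewise_eq_of_mem _ _ _ hv.2).symm
  have hfix : ∀ v ∉ Icc x y, g' v = v := fun v hv => piecewise_eq_of_notMem _ _ _ hv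
  have hmono' : StrictMonoOn g' (insert x F) :=
    hmono.piecewise_Icc_id fun v hv => (hbij.mapsTo hv).2
  have hsplit : ∀ z ∈ Icc x y, insert z F = (insert z F ∩ Icc x y) ∪ (F \ Icc x y) := by
    intro z hz
    rw [← insert_sdiff_of_mem F hz, inter_union_sdiff]
  refine ⟨g', ?_, hmono', hfix, fun v hv => ?_⟩
  · rw [hsplit x hxI, hsplit y hyI]
    refine (hbij.congr hgg').union ((bijOn_id _).congr fun v hv => (hfix v hv.2).symm) ?_
    exact (hsplit x hxI ▸ hmono').injOn
  · rw [← hgg' hv]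
    obtain ⟨hw, hwI⟩ := hbij.mapsTo hv
    refine ⟨hwI.1.lt_of_ne fun h => ?_, hwI.2⟩
    rcases hw with h' | h'
    · exact hxy.ne (h.trans h')
    · exact hx (h ▸ h')

def Interleaves (B A : Set α) : Prop :=
  ∀ x ∈ A, ∀ y ∈ A, x ≤ y → x ≠ y → ∃ z ∈ B, x ≤ z ∧ z ≤ y

theorem le_and_le_of_strictMono_or_strictAnti {u : ℕ → α} (hu : StrictMono u ∨ StrictAnti u)
    {i j l : ℕ} (hij : min i l < j) (hjl : j < max i l) (hil : u i ≤ u l) :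
    u i ≤ u j ∧ u j ≤ u l := by
  rcases hu with hu | hu
  · have : i < l := by
      by_contra h
      exact (hu (by omega : l < i)).not_ge hil
    exact ⟨hu.monotone (by omega), hu.monotone (by omega)⟩
  · have : l < i := by
      by_contra h
      exact (hu (by omega : i < l)).not_ge hil
    exact ⟨hu.antitone (by omega), hu.antitone (by omega)⟩

theorem Set.Infinite.exists_interleaving_subsets {C : Set α} (hC : C.Infinite) :
    ∃ A₁ ⊆ C, ∃ A₂ ⊆ C, A₁.Infinite ∧ A₂.Infinite ∧ Disjoint A₁ A₂ ∧
      Interleaves A₂ A₁ ∧ Interleaves A₁ A₂ := by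
  have := hC.to_subtype
  obtain ⟨f, hf⟩ := Infinite.exists_strictMono_or_strictAnti C
  set u : ℕ → α := fun n => f n
  have hu : StrictMono u ∨ StrictAnti u :=
    hf.imp (Subtype.strictMono_coe _).comp (Subtype.strictMono_coe _).comp_strictAnti
  have hinj : Injective u := hu.elim StrictMono.injective StrictAnti.injective
  refine ⟨range fun n => u (2 * n), range_subset_iff.2 fun n => (f _).2,
    range fun n => u (2 * n + 1), range_subset_iff.2 fun n => (f _).2,
    infinite_range_of_injective fun a b h => by have := hinj h; omega,
    infinite_range_of_injective fun a b h => by have := hinj h; omega,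
    disjoint_left.2 ?_, ?_, ?_⟩
  · rintro _ ⟨a, rfl⟩ ⟨b, hb⟩
    have := hinj hb
    omega
  · rintro _ ⟨a, rfl⟩ _ ⟨b, rfl⟩ hle hne
    have hab : a ≠ b := by rintro rfl; exact hne rfl
    exact ⟨_, ⟨min a b, rfl⟩,
      le_and_le_of_strictMono_or_strictAnti hu (by omega) (by omega) hle⟩
  · rintro _ ⟨a, rfl⟩ _ ⟨b, rfl⟩ hle hne
    have hab : a ≠ b := by rintro rfl; exact hne rfl
    exact ⟨_, ⟨min a b + 1, rfl⟩,
      le_and_le_of_strictMono_or_strictAnti hu (by omega) (by omega) hle⟩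

end LinearOrder

namespace OrdBin

variable {ι : Type}

noncomputable instance (R : OrdBin ι) : LinearOrder R.V :=
  haveI := R.linear
  { le := R.le
    le_refl := refl_of R.le
    le_trans := fun _ _ _ => trans_of R.le
    le_antisymm := fun _ _ => antisymm_of R.le
    le_total := total_of R.le
    toDecidableLE := Classical.decRel _ }

theorem Iso.refl (R : OrdBin ι) : Iso R R :=
  ⟨Equiv.refl _, fun _ _ => Iff.rfl, fun _ _ _ => Iff.rfl⟩

theorem Iso.symm {R S : OrdBin ι} (h : Iso R S) : Iso S R := by
  obtain ⟨e, hle, hrel⟩ := h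
  refine ⟨e.symm, fun a b => ?_, fun i a b => ?_⟩
  · rw [hle, e.apply_symm_apply, e.apply_symm_apply]
  · rw [hrel, e.apply_symm_apply, e.apply_symm_apply]

theorem Iso.trans {R S T : OrdBin ι} (h : Iso R S) (h' : Iso S T) : Iso R T := by
  obtain ⟨e, hle, hrel⟩ := h
  obtain ⟨e', hle', hrel'⟩ := h'
  exact ⟨e.trans e', fun a b => (hle a b).trans (hle' _ _),
    fun i a b => (hrel i a b).trans (hrel' i _ _)⟩

section dEq

variable {R : OrdBin ι} {u v u' v' u'' v'' : R.V}

theorem dEq.refl (R : OrdBin ι) (u v : R.V) : dEq R u v u v := fun _ => ⟨Iff.rfl, Iff.rfl⟩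

theorem dEq.symm (h : dEq R u v u' v') : dEq R u' v' u v :=
  fun i => ⟨(h i).1.symm, (h i).2.symm⟩

theorem dEq.trans (h : dEq R u v u' v') (h' : dEq R u' v' u'' v'') : dEq R u v u'' v'' :=
  fun i => ⟨(h i).1.trans (h' i).1, (h i).2.trans (h' i).2⟩

theorem dEq.swap (h : dEq R u v u' v') : dEq R v u v' u' :=
  fun i => ⟨(h i).2, (h i).1⟩

end dEq

theorem iso_restrict_of_bijOn (R : OrdBin ι) {A B : Set R.V} {g : R.V → R.V}
    (hg : BijOn g A B) (hmono : StrictMonoOn g A)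
    (hd : ∀ u ∈ A, ∀ v ∈ A, u ≤ v → dEq R u v (g u) (g v)) :
    Iso (R.restrict A) (R.restrict B) := by
  refine ⟨hg.equiv g, fun u v => (hmono.le_iff_le u.2 v.2).symm, fun i u v => ?_⟩
  rcases le_total u.1 v.1 with huv | hvu
  · exact (hd u.1 u.2 v.1 v.2 huv i).1
  · exact (hd v.1 v.2 u.1 u.2 hvu i).2

/-- An isomorphism of finite chains is the unique increasing bijection, so it matches them term
by term. -/
theorem Iso.dEq_of_chain {R : OrdBin ι} {A B : Set R.V} (h : Iso (R.restrict A) (R.restrict B))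
    {n : ℕ} {a b : Fin n → R.V} (ha : StrictMono a) (hb : StrictMono b) (hA : range a = A)
    (hB : range b = B) (j l : Fin n) : dEq R (a j) (a l) (b j) (b l) := by
  subst hA hB
  obtain ⟨e, hle, hrel⟩ := h
  let f : Fin n → R.V := fun j => (e ⟨a j, j, rfl⟩).1
  have hf : StrictMono f := fun j l hjl =>
    lt_of_le_of_ne ((hle ⟨a j, j, rfl⟩ ⟨a l, l, rfl⟩).1 (ha hjl).le) fun heq =>
      (ha hjl).ne (congrArg Subtype.val (e.injective (Subtype.ext heq)))
  have hrange : range f = range b := by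
    refine Subset.antisymm (range_subset_iff.2 fun j => (e ⟨a j, j, rfl⟩).2) fun w hw => ?_
    obtain ⟨⟨_, j, rfl⟩, hj⟩ := e.surjective ⟨w, hw⟩
    exact ⟨j, congrArg Subtype.val hj⟩
  rw [← (hf.range_inj hb).1 hrange]
  exact fun i =>
    ⟨hrel i ⟨a j, j, rfl⟩ ⟨a l, l, rfl⟩, hrel i ⟨a l, l, rfl⟩ ⟨a j, j, rfl⟩⟩

theorem eqM_refl (R : OrdBin ι) (m : ℕ) (x : R.V) : EqM R m x x := fun _ _ _ _ _ => Iso.refl _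

theorem eqLe_refl (R : OrdBin ι) (m : ℕ) (x : R.V) : EqLe R m x x := fun _ _ => eqM_refl R _ x

section Equivalences

variable {R : OrdBin ι} {m : ℕ} {x y z : R.V}

theorem eqM_symm (h : EqM R m x y) : EqM R m y x :=
  fun F hF hc hy hx => (h F hF hc hx hy).symm

theorem eqM_trans (hxy : EqM R m x y) (hyz : EqM R m y z) : EqM R m x z := by
  intro F hF hc hxF hzF
  by_cases hyF : y ∈ F
  case neg => exact (hxy F hF hc hxF hyF).trans (hyz F hF hc hyF hzF)
  obtain rfl | hxz := eq_or_ne x z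
  · exact Iso.refl _
  have hxy' : x ≠ y := fun h => hxF (h ▸ hyF)
  have hzy : z ≠ y := fun h => hzF (h ▸ hyF)
  -- replace `y` in `F` by the other endpoint, which keeps `|F| = m`
  set G := F \ {y}
  have hcard : ∀ w ∉ F, (insert w G).ncard = m := fun w hw => by
    rw [ncard_insert_of_notMem (fun h => hw h.1) hF.sdiff, ncard_sdiff_singleton_add_one hyF hF, hc]
  have hswap : ∀ w, insert y (insert w G) = insert w F := fun w => by
    rw [insert_comm, insert_sdiff_singleton, insert_eq_of_mem hyF]
  have h₁ : EqF R (insert z G) x y := hxy _ (hF.sdiff.insert z) (hcard z hzF)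
    (by simp [G, hxz, hxF]) (by simp [G, hzy.symm])
  have h₂ : EqF R (insert x G) y z := hyz _ (hF.sdiff.insert x) (hcard x hxF)
    (by simp [G, hxy'.symm]) (by simp [G, hxz.symm, hzF])
  unfold EqF at h₁ h₂
  rw [hswap] at h₁ h₂
  rw [insert_comm] at h₂
  exact h₂.trans h₁

theorem eqM_zero_iff : EqM R 0 x y ↔ ∀ i, R.rel i x x ↔ R.rel i y y := by
  constructor
  · intro h i
    exact (Iso.dEq_of_chain (a := ![x]) (b := ![y])
      (h ∅ finite_empty (ncard_empty _) (notMem_empty x) (notMem_empty y))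
      (Subsingleton.strictMono _) (Subsingleton.strictMono _) (by simp) (by simp) 0 0 i).1
  · intro h F hF hc _ _
    obtain rfl := (ncard_eq_zero hF).1 hc
    refine iso_restrict_of_bijOn R (g := fun _ => y) (by simp) (by simp) ?_
    simp only [insert_empty_eq, mem_singleton_iff]
    rintro _ rfl _ rfl -
    exact fun i => ⟨h i, h i⟩

theorem eqF_singleton_of_eqM_one (h : EqM R 1 x y) (hx : z ≠ x) (hy : z ≠ y) :
    EqF R {z} x y :=
  h {z} (finite_singleton z) (ncard_singleton z) (by simpa using hx.symm) (by simpa using hy.symm)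

theorem eqF_pair_of_eqM_two {u v : R.V} (h : EqM R 2 x y) (huv : u ≠ v) (hux : u ≠ x)
    (huy : u ≠ y) (hvx : v ≠ x) (hvy : v ≠ y) : EqF R {u, v} x y :=
  h {u, v} (toFinite _) (ncard_pair huv) (by simp [hux.symm, hvx.symm])
    (by simp [huy.symm, hvy.symm])

theorem rel_self_iff_of_eqM (h0 : EqM R 0 x y) (h1 : EqM R 1 x y) {p : R.V}
    (hp : p ∈ Icc x y) (i : ι) : R.rel i p p ↔ R.rel i x x := by
  rcases hp.1.eq_or_lt with rfl | hxp
  · rfl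
  rcases hp.2.eq_or_lt with rfl | hpy
  · exact (eqM_zero_iff.1 h0 i).symm
  have h := eqF_singleton_of_eqM_one h1 hxp.ne' hpy.ne
  exact ((Iso.dEq_of_chain h (a := ![x, p]) (b := ![p, y]) (by simp [hxp]) (by simp [hpy])
    (by ext; simp [or_comm]) (by ext; simp) 0 0 i).1).symm

theorem dEq_of_eqM_of_notMem_Icc (h1 : EqM R 1 x y) (h2 : EqM R 2 x y) (hz : z ∉ Icc x y)
    {p : R.V} (hp : p ∈ Icc x y) : dEq R p z x z := by
  have hxy : x ≤ y := hp.1.trans hp.2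
  have hzxy : z < x ∨ y < z := by simp only [mem_Icc, not_and_or, not_le] at hz; exact hz
  have hzx : z ≠ x := by rintro rfl; exact hz ⟨le_rfl, hxy⟩
  have hzy : z ≠ y := by rintro rfl; exact hz ⟨hxy, le_rfl⟩
  rcases hp.1.eq_or_lt with rfl | hxp
  · exact dEq.refl _ _ _
  rcases hp.2.eq_or_lt with rfl | hpy
  · have h := eqF_singleton_of_eqM_one h1 hzx hzy
    rcases hzxy with hzx' | hyz
    · exact (Iso.dEq_of_chain h (a := ![z, x]) (b := ![z, p]) (by simp [hzx'])
        (by simp [hzx'.trans hxp]) (by ext; simp) (by ext; simp [or_comm]) 1 0).symm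
    · exact (Iso.dEq_of_chain h (a := ![x, z]) (b := ![p, z]) (by simp [hxp.trans hyz])
        (by simp [hyz]) (by ext; simp [or_comm]) (by ext; simp [or_comm]) 0 1).symm
  have hpz : p ≠ z := by rintro rfl; exact hz hp
  have h := eqF_pair_of_eqM_two h2 hpz hxp.ne' hpy.ne hzx hzy
  rcases hzxy with hzx' | hyz
  · exact (Iso.dEq_of_chain h (a := ![z, x, p]) (b := ![z, p, y]) (by simp [hzx', hxp])
      (by simp [hzx'.trans hxp, hpy]) (by ext; simp [or_comm, or_left_comm])
      (by ext; simp [or_comm]) 1 0).symm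
  · exact (Iso.dEq_of_chain h (a := ![x, p, z]) (b := ![p, y, z]) (by simp [hxp, hpy.trans hyz])
      (by simp [hpy, hyz]) (by ext; simp [or_comm, or_left_comm])
      (by ext; simp [or_comm, or_left_comm]) 0 2).symm

theorem dEq_of_eqM_of_mem_Ioo (h1 : EqM R 1 x y) (h2 : EqM R 2 x y) {u v : R.V}
    (hu : u ∈ Ioo x y) (hv : v ∈ Ioo x y) : dEq R x u x v := by
  wlog huv : u < v generalizing u v
  · rcases (not_lt.1 huv).eq_or_lt with rfl | hvu
    · exact dEq.refl _ _ _
    · exact (this hv hu hvu).symm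
  have d₁ : dEq R x u u y := Iso.dEq_of_chain (eqF_singleton_of_eqM_one h1 hu.1.ne' hu.2.ne)
    (a := ![x, u]) (b := ![u, y]) (by simp [hu.1]) (by simp [hu.2])
    (by ext; simp [or_comm]) (by ext; simp) 0 1
  have d₂ : dEq R x v u y := Iso.dEq_of_chain
    (eqF_pair_of_eqM_two h2 huv.ne hu.1.ne' hu.2.ne hv.1.ne' hv.2.ne)
    (a := ![x, u, v]) (b := ![u, v, y]) (by simp [hu.1, huv]) (by simp [huv, hv.2])
    (by ext; simp [or_comm, or_left_comm]) (by ext; simp [or_comm]) 0 2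
  exact d₁.trans d₂.symm

theorem exists_dEq_of_eqM (h1 : EqM R 1 x y) (h2 : EqM R 2 x y) {p q : R.V}
    (hp : p ∈ Icc x y) (hq : q ∈ Icc x y) (hpq : p < q) (hproper : ¬(p = x ∧ q = y)) :
    ∃ w ∈ Ioo x y, dEq R p q x w := by
  rcases hp.1.eq_or_lt with rfl | hxp
  · exact ⟨q, ⟨hpq, hq.2.lt_of_ne fun h => hproper ⟨rfl, h⟩⟩, dEq.refl _ _ _⟩
  have hpy : p < y := hpq.trans_le hq.2
  refine ⟨p, ⟨hxp, hpy⟩, ?_⟩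
  rcases hq.2.eq_or_lt with rfl | hqy
  · exact (Iso.dEq_of_chain (eqF_singleton_of_eqM_one h1 hxp.ne' hpy.ne)
      (a := ![x, p]) (b := ![p, q]) (by simp [hxp]) (by simp [hpq])
      (by ext; simp [or_comm]) (by ext; simp [or_comm]) 0 1).symm
  · exact (Iso.dEq_of_chain
      (eqF_pair_of_eqM_two h2 hpq.ne hxp.ne' hpy.ne (hxp.trans hpq).ne' hqy.ne)
      (a := ![x, p, q]) (b := ![p, q, y]) (by simp [hxp, hpq]) (by simp [hpq, hqy])
      (by ext; simp [or_comm, or_left_comm]) (by ext; simp [or_comm]) 0 1).symm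

theorem dEq_of_eqM_of_lt (h1 : EqM R 1 x y) (h2 : EqM R 2 x y) {p q : R.V}
    (hp : p ∈ Icc x y) (hq : q ∈ Icc x y) (hpq : p < q) (hproper : ¬(p = x ∧ q = y))
    {w : R.V} (hw : w ∈ Ioo x y) : dEq R p q x w := by
  obtain ⟨w', hw', h⟩ := exists_dEq_of_eqM h1 h2 hp hq hpq hproper
  exact h.trans (dEq_of_eqM_of_mem_Ioo h1 h2 hw' hw)

theorem eqF_of_lt_of_eqLe_two (hxy : x < y) (h : EqLe R 2 x y) {F : Set R.V} (hF : F.Finite)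
    (hx : x ∉ F) (hy : y ∉ F) : EqF R F x y := by
  have h0 := h 0 (by norm_num)
  have h1 := h 1 (by norm_num)
  have h2 := h 2 le_rfl
  obtain ⟨g, hbij, hmono, hfix, hIoc⟩ := hF.exists_shift hxy hx hy
  refine iso_restrict_of_bijOn R hbij hmono fun u hu v hv huv => ?_
  by_cases huI : u ∈ Icc x y <;> by_cases hvI : v ∈ Icc x y
  · have hgu := hIoc ⟨hu, huI⟩
    have hgv := hIoc ⟨hv, hvI⟩
    rcases huv.eq_or_lt with rfl | huv
    · have hd : ∀ i, R.rel i u u ↔ R.rel i (g u) (g u) := fun i =>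
        (rel_self_iff_of_eqM h0 h1 huI i).trans
          (rel_self_iff_of_eqM h0 h1 (Ioc_subset_Icc_self hgu) i).symm
      exact fun i => ⟨hd i, hd i⟩
    have hvy : v ≠ y := by
      rintro rfl
      exact hy (hv.resolve_left hxy.ne')
    have hm : v ∈ Ioo x y := ⟨huI.1.trans_lt huv, hvI.2.lt_of_ne hvy⟩
    exact (dEq_of_eqM_of_lt h1 h2 huI hvI huv (fun h => hvy h.2) hm).trans
      (dEq_of_eqM_of_lt h1 h2 (Ioc_subset_Icc_self hgu) (Ioc_subset_Icc_self hgv)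
        (hmono hu hv huv) (fun h => hgu.1.ne' h.1) hm).symm
  · rw [hfix v hvI]
    exact (dEq_of_eqM_of_notMem_Icc h1 h2 hvI huI).trans
      (dEq_of_eqM_of_notMem_Icc h1 h2 hvI (Ioc_subset_Icc_self (hIoc ⟨hu, huI⟩))).symm
  · rw [hfix u huI]
    exact ((dEq_of_eqM_of_notMem_Icc h1 h2 huI hvI).trans
      (dEq_of_eqM_of_notMem_Icc h1 h2 huI (Ioc_subset_Icc_self (hIoc ⟨hv, hvI⟩))).symm).swap
  · rw [hfix u huI, hfix v hvI]
    exact dEq.refl _ _ _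

theorem eqLe_symm (h : EqLe R m x y) : EqLe R m y x := fun m' hm' => eqM_symm (h m' hm')

theorem eqLe_trans (hxy : EqLe R m x y) (hyz : EqLe R m y z) : EqLe R m x z :=
  fun m' hm' => eqM_trans (hxy m' hm') (hyz m' hm')

theorem eqLe_zero_iff : EqLe R 0 x y ↔ EqM R 0 x y :=
  ⟨fun h => h 0 le_rfl, fun h _ hm' => Nat.le_zero.1 hm' ▸ h⟩

theorem eqLe_succ_iff : EqLe R (m + 1) x y ↔ EqLe R m x y ∧ EqM R (m + 1) x y :=
  ⟨fun h => ⟨fun m' hm' => h m' (Nat.le_succ_of_le hm'), h _ le_rfl⟩,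
    fun ⟨h, h'⟩ m' hm' => (Nat.le_succ_iff.1 hm').elim (h m') fun e => e ▸ h'⟩

theorem eqLe_two_iff_eqR : EqLe R 2 x y ↔ EqR R x y := by
  refine ⟨fun h m F hF _ hx hy => ?_, fun h m _ => h m⟩
  rcases lt_trichotomy x y with hxy | rfl | hyx
  · exact eqF_of_lt_of_eqLe_two hxy h hF hx hy
  · exact Iso.refl _
  · exact (eqF_of_lt_of_eqLe_two hyx (eqLe_symm h) hF hy hx).symm

end Equivalences

end OrdBin

open OrdBin in
/-- If `≃_R` has infinitely many equivalence classes on an ordered binary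
structure `R` of type `k`, then either there is an infinite set whose distinct elements are
`0`-equivalent but not `1`-equivalent, or there are two disjoint infinite sets `A₁, A₂`
whose distinct elements are `1`-equivalent but not `2`-equivalent, and such that between
any two elements of one set there is an element of the other. -/
theorem separation_lemma {k : ℕ} (R : OrdBin (Fin k))
    (hinf : {A : Set R.V | ∃ a : R.V, A = {y | OrdBin.EqR R a y}}.Infinite) :
    (∃ A : Set R.V, A.Infinite ∧
        ∀ x ∈ A, ∀ y ∈ A, x ≠ y → OrdBin.EqM R 0 x y ∧ ¬ OrdBin.EqM R 1 x y) ∨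
    (∃ A₁ A₂ : Set R.V, A₁.Infinite ∧ A₂.Infinite ∧ Disjoint A₁ A₂ ∧
        (∀ x ∈ A₁, ∀ y ∈ A₁, x ≠ y → OrdBin.EqM R 1 x y ∧ ¬ OrdBin.EqM R 2 x y) ∧
        (∀ x ∈ A₂, ∀ y ∈ A₂, x ≠ y → OrdBin.EqM R 1 x y ∧ ¬ OrdBin.EqM R 2 x y) ∧
        (∀ x ∈ A₁, ∀ y ∈ A₁, R.le x y → x ≠ y → ∃ z ∈ A₂, R.le x z ∧ R.le z y) ∧
        (∀ x ∈ A₂, ∀ y ∈ A₂, R.le x y → x ≠ y → ∃ z ∈ A₁, R.le x z ∧ R.le z y)) := by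
  by_cases hfin : {A : Set R.V | ∃ a, A = {y | EqLe R 1 a y}}.Finite
  · right
    have hinf₂ : {A : Set R.V | ∃ a, A = {y | EqLe R 2 a y}}.Infinite := by
      simpa only [eqLe_two_iff_eqR] using hinf
    obtain ⟨B, hB, hBne⟩ := exists_infinite_pairwise_not_of_infinite_classes
      (E := EqLe R 2) eqLe_symm eqLe_trans hinf₂
    obtain ⟨C, hCB, hC, hCE⟩ :=
      hB.exists_infinite_pairwise_of_finite_classes (eqLe_refl R 1) hfin
    have hC₁₂ : ∀ x ∈ C, ∀ y ∈ C, x ≠ y → EqM R 1 x y ∧ ¬EqM R 2 x y := by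
      intro x hx y hy hxy
      exact ⟨hCE hx hy hxy 1 le_rfl,
        fun h₂ => hBne (hCB hx) (hCB hy) hxy (eqLe_succ_iff.2 ⟨hCE hx hy hxy, h₂⟩)⟩
    obtain ⟨A₁, hA₁, A₂, hA₂, hinf₁, hinf₂, hdisj, h₂₁, h₁₂⟩ :=
      hC.exists_interleaving_subsets
    exact ⟨A₁, A₂, hinf₁, hinf₂, hdisj,
      fun x hx y hy => hC₁₂ x (hA₁ hx) y (hA₁ hy),
      fun x hx y hy => hC₁₂ x (hA₂ hx) y (hA₂ hy), h₂₁, h₁₂⟩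
  · left
    obtain ⟨B, hB, hBne⟩ := exists_infinite_pairwise_not_of_infinite_classes
      (E := EqLe R 1) eqLe_symm eqLe_trans hfin
    obtain ⟨C, hCB, hC, c, hc⟩ :=
      hB.exists_infinite_subset_const fun a => {i : Fin k | R.rel i a a}
    refine ⟨C, hC, fun x hx y hy hxy => ?_⟩
    have h₀ : EqM R 0 x y := eqM_zero_iff.2 fun i => by
      simpa using congrArg (i ∈ ·) ((hc x hx).trans (hc y hy).symm)
    exact ⟨h₀, fun h₁ => hBne (hCB hx) (hCB hy) hxy
      ((eqLe_succ_iff (m := 0)).2 ⟨eqLe_zero_iff.2 h₀, h₁⟩)⟩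
end

section
/- If a relational structure R of finite signature admits a monomorphic decomposition into ℓ blocks (ℓ ≥ 1), then its profile satisfies φ_R(n) ≤ binomial(n + ℓ − 1, ℓ − 1) for every n ∈ ℕ. -/
/-!
Send a finite set `A` to the multiset recording, for each of its elements, the block
of the decomposition containing it; for `n`-element sets this is an element of `Sym P n`, a set
of `(ℓ + n - 1).choose n` elements by stars and bars. Two sets with the same multiset meet every
block in equally many elements, and then they induce isomorphic substructures: replacing the
part of `A` inside one block at a time by the corresponding part of `A'` keeps the cardinality
and changes nothing outside that block, so each step is an isomorphism by monomorphy.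
-/

/-- A relational structure of signature `ar : ι → ℕ`: a domain `V` together with,
for each `i : ι`, an `ar i`-ary relation on `V`. -/
structure RelStruct (ι : Type) (ar : ι → ℕ) where
  V : Type
  rel : ∀ i : ι, (Fin (ar i) → V) → Prop

namespace RelStruct

variable {ι : Type} {ar : ι → ℕ}

/-- The substructure induced on a subset `A` of the domain. -/
def restrict (R : RelStruct ι ar) (A : Set R.V) : RelStruct ι ar where
  V := A
  rel := fun i f => R.rel i fun j => (f j : R.V)

/-- Isomorphism of relational structures: a bijection of the domains transporting
each relation onto the corresponding one. -/
def Iso (R S : RelStruct ι ar) : Prop :=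
  ∃ e : R.V ≃ S.V, ∀ (i : ι) (f : Fin (ar i) → R.V), R.rel i f ↔ S.rel i fun j => e (f j)

/-- `R` embeds in `S` if `R` is isomorphic to an induced substructure of `S`. -/
def Embeds (R S : RelStruct ι ar) : Prop :=
  ∃ A : Set S.V, Iso R (S.restrict A)

/-- `B` is a monomorphic part of `R`: any two finite subsets of the domain of the
same cardinality which agree outside `B` induce isomorphic substructures. -/
def MonoPart (R : RelStruct ι ar) (B : Set R.V) : Prop :=
  ∀ A A' : Set R.V, A.Finite → A'.Finite → A.ncard = A'.ncard →
    A \ B = A' \ B → Iso (R.restrict A) (R.restrict A')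

/-- A monomorphic decomposition of `R`: a partition of the domain into monomorphic parts. -/
def MonoDecomp (R : RelStruct ι ar) (P : Set (Set R.V)) : Prop :=
  Setoid.IsPartition P ∧ ∀ B ∈ P, R.MonoPart B

/-- `R` has a monomorphic decomposition with finitely many blocks. -/
def HasFiniteMonoDecomp (R : RelStruct ι ar) : Prop :=
  ∃ P : Set (Set R.V), R.MonoDecomp P ∧ P.Finite

/-- The age of `R`: the class of finite structures embeddable in `R`. -/
def Age (R : RelStruct ι ar) : Set (RelStruct ι ar) :=
  {S | Finite S.V ∧ Embeds S R}

/-- A hereditary class of finite structures: all members are finite, and every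
structure embeddable in a member is again a member. -/
def Hereditary (C : Set (RelStruct ι ar)) : Prop :=
  (∀ R ∈ C, Finite R.V) ∧ ∀ R ∈ C, ∀ S : RelStruct ι ar, Embeds S R → S ∈ C

/-- `x` and `y` are `F`-equivalent: the substructures induced on `{x} ∪ F` and
`{y} ∪ F` are isomorphic. -/
def EqF (R : RelStruct ι ar) (F : Set R.V) (x y : R.V) : Prop :=
  Iso (R.restrict (insert x F)) (R.restrict (insert y F))

/-- `x ≃_{m,R} y`: `x` and `y` are `F`-equivalent for every `m`-element subset `F`
of `V \ {x, y}`. -/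
def EqM (R : RelStruct ι ar) (m : ℕ) (x y : R.V) : Prop :=
  ∀ F : Set R.V, F.Finite → F.ncard = m → x ∉ F → y ∉ F → EqF R F x y

/-- `x ≃_{≤m,R} y`: `x ≃_{m',R} y` for every `m' ≤ m`. -/
def EqLe (R : RelStruct ι ar) (m : ℕ) (x y : R.V) : Prop :=
  ∀ m' ≤ m, EqM R m' x y

/-- `x ≃_R y`: `x ≃_{m,R} y` for every `m`. -/
def EqR (R : RelStruct ι ar) (x y : R.V) : Prop :=
  ∀ m : ℕ, EqM R m x y

/-- The profile of `R`: the number of induced substructures on `n`-element subsets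
of the domain, counted up to isomorphism. -/
noncomputable def profileR (R : RelStruct ι ar) (n : ℕ) : ℕ :=
  Nat.card (Quot fun (A B : {A : Set R.V // A.Finite ∧ A.ncard = n}) =>
    Iso (R.restrict A.1) (R.restrict B.1))

end RelStruct

theorem Nat.card_quot_le_of_complete_invariant {α β : Type*} [Finite β] {r : α → α → Prop}
    (f : α → β) (hf : ∀ a b, f a = f b → r a b) : Nat.card (Quot r) ≤ Nat.card β := by
  refine Nat.card_le_card_of_injective (fun q => f q.out) fun q q' h => ?_
  rw [← Quot.out_eq q, ← Quot.out_eq q']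
  exact Quot.sound (hf _ _ h)

namespace Setoid.IsPartition

variable {α : Type*} {c : Set (Set α)}

noncomputable def blockOf (hc : IsPartition c) (x : α) : c :=
  ⟨(hc.2 x).exists.choose, (hc.2 x).exists.choose_spec.1⟩

theorem blockOf_eq_iff (hc : IsPartition c) {x : α} {B : c} :
    hc.blockOf x = B ↔ x ∈ (B : Set α) := by
  refine ⟨fun h => h ▸ (hc.2 x).exists.choose_spec.2, fun hx => Subtype.ext ?_⟩
  exact (hc.2 x).unique (hc.2 x).exists.choose_spec ⟨B.2, hx⟩

noncomputable def blockMultiset (hc : IsPartition c) {A : Set α} (hA : A.Finite) : Multiset c :=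
  hA.toFinset.val.map hc.blockOf

theorem card_blockMultiset (hc : IsPartition c) {A : Set α} (hA : A.Finite) :
    Multiset.card (hc.blockMultiset hA) = A.ncard := by
  simp [blockMultiset, Set.ncard_eq_toFinset_card _ hA]

theorem count_blockMultiset (hc : IsPartition c) {A : Set α} (hA : A.Finite) (B : c) :
    (hc.blockMultiset hA).count B = (A ∩ B).ncard := by
  classical
  have hAB : A ∩ B = ↑(hA.toFinset.filter fun x => B = hc.blockOf x) := by
    ext x; simp [eq_comm (a := B), hc.blockOf_eq_iff]
  rw [blockMultiset, Multiset.count_map, hAB, Set.ncard_coe_finset, Finset.card_def,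
    Finset.filter_val]

end Setoid.IsPartition

namespace RelStruct

variable {ι : Type} {ar : ι → ℕ} {R S T : RelStruct ι ar}

theorem Iso.refl (R : RelStruct ι ar) : R.Iso R :=
  ⟨Equiv.refl _, fun _ _ => Iff.rfl⟩

theorem Iso.trans (h₁ : R.Iso S) (h₂ : S.Iso T) : R.Iso T := by
  obtain ⟨e, he⟩ := h₁
  obtain ⟨g, hg⟩ := h₂
  exact ⟨e.trans g, fun i f => (he i f).trans (hg i _)⟩

theorem MonoPart.iso_of_ncard_inter_eq {B A A' : Set R.V} (hB : R.MonoPart B)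
    (hA : A.Finite) (hA' : A'.Finite) (hout : A \ B = A' \ B)
    (hin : (A ∩ B).ncard = (A' ∩ B).ncard) : (R.restrict A).Iso (R.restrict A') := by
  refine hB A A' hA hA' ?_ hout
  rw [← Set.ncard_inter_add_ncard_sdiff_eq_ncard A B hA,
    ← Set.ncard_inter_add_ncard_sdiff_eq_ncard A' B hA', hin, hout]

theorem iso_of_ncard_inter_eq {P : Set (Set R.V)} (hfin : P.Finite)
    (hmono : ∀ B ∈ P, R.MonoPart B) (hdisj : P.PairwiseDisjoint id)
    {A A' : Set R.V} (hA : A.Finite) (hA' : A'.Finite) (hout : A \ ⋃₀ P = A' \ ⋃₀ P)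
    (hin : ∀ B ∈ P, (A ∩ B).ncard = (A' ∩ B).ncard) :
    (R.restrict A).Iso (R.restrict A') := by
  induction P, hfin using Set.Finite.induction_on generalizing A with
  | empty =>
    simp only [Set.sUnion_empty, Set.sdiff_empty] at hout
    exact hout ▸ Iso.refl _
  | @insert B P hBP _ ih =>
    simp only [Set.mem_insert_iff, forall_eq_or_imp] at hmono hin
    rw [Set.sUnion_insert] at hout
    have hBC : ∀ C ∈ P, Disjoint B C := fun C hC =>
      hdisj (Set.mem_insert _ _) (Set.mem_insert_of_mem _ hC) (ne_of_mem_of_not_mem hC hBP).symm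
    set M := A' ∩ B ∪ A \ B with hM
    have hMfin : M.Finite := (hA'.inter_of_left B).union hA.sdiff
    have hAM : (R.restrict A).Iso (R.restrict M) := by
      refine hmono.1.iso_of_ncard_inter_eq hA hMfin ?_ ?_
      · ext x; simp only [hM, Set.mem_sdiff, Set.mem_union, Set.mem_inter_iff]; tauto
      · rw [hin.1]; congr 1; ext x
        simp only [hM, Set.mem_union, Set.mem_inter_iff, Set.mem_sdiff]; tauto
    refine hAM.trans (ih hmono.2 (hdisj.subset (Set.subset_insert _ _)) hMfin ?_ fun C hC => ?_)
    · ext x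
      have hx := Set.ext_iff.1 hout x
      simp only [hM, Set.mem_sdiff, Set.mem_union, Set.mem_inter_iff] at hx ⊢
      tauto
    · rw [← hin.2 C hC]; congr 1; ext x
      have hxB : x ∈ C → x ∉ B := fun h => Set.disjoint_right.1 (hBC C hC) h
      simp only [hM, Set.mem_union, Set.mem_inter_iff, Set.mem_sdiff]; tauto

theorem profileR_le_choose {P : Set (Set R.V)} (hP : R.MonoDecomp P) (hfin : P.Finite) (n : ℕ) :
    R.profileR n ≤ (P.ncard + n - 1).choose n := by
  classical
  have := hfin.fintype
  let blocks (A : {A : Set R.V // A.Finite ∧ A.ncard = n}) : Sym P n :=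
    ⟨hP.1.blockMultiset A.2.1, (hP.1.card_blockMultiset A.2.1).trans A.2.2⟩
  have hblocks : ∀ A A', blocks A = blocks A' → (R.restrict A.1).Iso (R.restrict A'.1) := by
    intro A A' h
    refine iso_of_ncard_inter_eq hfin hP.2 hP.1.pairwiseDisjoint A.2.1 A'.2.1
      (by simp only [hP.1.sUnion_eq_univ, Set.sdiff_univ]) fun B hB => ?_
    have hcount := congrArg (fun s : Sym P n => (s : Multiset P).count ⟨B, hB⟩) h
    simpa only [blocks, Sym.coe_mk, hP.1.count_blockMultiset] using hcount
  calc R.profileR n ≤ Nat.card (Sym P n) := Nat.card_quot_le_of_complete_invariant blocks hblocks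
    _ = (P.ncard + n - 1).choose n := by
      rw [Nat.card_eq_fintype_card, Sym.card_sym_eq_choose, ← Nat.card_eq_fintype_card,
        Nat.card_coe_set_eq]

end RelStruct

theorem profile_bound_of_monomorphic_decomposition_general {ι : Type} {ar : ι → ℕ}
    (R : RelStruct ι ar) (ℓ : ℕ) (hℓ : 1 ≤ ℓ) (P : Set (Set R.V))
    (hP : R.MonoDecomp P) (hfin : P.Finite) (hcard : P.ncard = ℓ) :
    ∀ n : ℕ, RelStruct.profileR R n ≤ (n + ℓ - 1).choose (ℓ - 1) := by
  intro n
  rw [Nat.choose_symm_of_eq_add (by omega : n + ℓ - 1 = ℓ - 1 + n), add_comm n, ← hcard]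
  exact R.profileR_le_choose hP hfin n

/-- If a relational structure `R` of finite signature admits a monomorphic
decomposition into `ℓ ≥ 1` blocks, then its profile satisfies
`φ_R(n) ≤ (n + ℓ - 1).choose (ℓ - 1)` for every `n`. -/
theorem profile_bound_of_monomorphic_decomposition {ι : Type} [Finite ι] {ar : ι → ℕ}
    (R : RelStruct ι ar) (ℓ : ℕ) (hℓ : 1 ≤ ℓ) (P : Set (Set R.V))
    (hP : R.MonoDecomp P) (hfin : P.Finite) (hcard : P.ncard = ℓ) :
    ∀ n : ℕ, RelStruct.profileR R n ≤ (n + ℓ - 1).choose (ℓ - 1) :=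
  profile_bound_of_monomorphic_decomposition_general R ℓ hℓ P hP hfin hcard
end
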